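/- Let L(q,p), G(q,p) be smooth on ℝ², c, c₀, C, Ω ∈ ℝ, X_L = (∂L/∂p)∂_q - (∂L/∂q)∂_p, and assume X_L²(G) = -2(cL + c₀)G. Let γ satisfy γ' + cγ² + C = 0 with γ ≠ 0 on its interval of definition. Define H = ½p_u² - 4γ'(u)L + 4c₀γ(u)² + Ω/γ(u)² and K̄ = (p_u + 2γ X_L)²(G) + 2Ω γ^{-2} G, where (p_u + 2γX_L)²(G) means p_u²G + 2γ p_u X_L(G) + ... is computed by applying the operator U = p_u + 2γ(u)X_L twice to G (treating p_u and γ(u) as multiplication operators). Then {H, K̄} = 0 for the canonical Poisson bracket in (u, q, p_u, p). -/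

import Mathlib

/-- Partial derivatives on `ℝ²` with coordinates `(q,p)`. -/
noncomputable def pdq (F : ℝ × ℝ → ℝ) (y : ℝ × ℝ) : ℝ :=
  deriv (fun t => F (t, y.2)) y.1

noncomputable def pdp (F : ℝ × ℝ → ℝ) (y : ℝ × ℝ) : ℝ :=
  deriv (fun t => F (y.1, t)) y.2

/-- Hamiltonian vector field of `L` on the `(q,p)` plane. -/
noncomputable def XL (L G : ℝ × ℝ → ℝ) (y : ℝ × ℝ) : ℝ :=
  pdp L y * pdq G y - pdq L y * pdp G y

/-- Partial derivatives on the extended phase space `(u, q, p_u, p)`. -/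
noncomputable def pdU (F : ℝ × ℝ × ℝ × ℝ → ℝ) (x : ℝ × ℝ × ℝ × ℝ) : ℝ :=
  deriv (fun t => F (t, x.2.1, x.2.2.1, x.2.2.2)) x.1

noncomputable def pdQ (F : ℝ × ℝ × ℝ × ℝ → ℝ) (x : ℝ × ℝ × ℝ × ℝ) : ℝ :=
  deriv (fun t => F (x.1, t, x.2.2.1, x.2.2.2)) x.2.1

noncomputable def pdPu (F : ℝ × ℝ × ℝ × ℝ → ℝ) (x : ℝ × ℝ × ℝ × ℝ) : ℝ :=
  deriv (fun t => F (x.1, x.2.1, t, x.2.2.2)) x.2.2.1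

noncomputable def pdP (F : ℝ × ℝ × ℝ × ℝ → ℝ) (x : ℝ × ℝ × ℝ × ℝ) : ℝ :=
  deriv (fun t => F (x.1, x.2.1, x.2.2.1, t)) x.2.2.2

/-- Canonical Poisson bracket on `(u, q, p_u, p)`. -/
noncomputable def PB (F G : ℝ × ℝ × ℝ × ℝ → ℝ) (x : ℝ × ℝ × ℝ × ℝ) : ℝ :=
  pdU F x * pdPu G x - pdPu F x * pdU G x + pdQ F x * pdP G x - pdP F x * pdQ G x

/-- `X_L` acting on functions of the extended phase space (only in the `(q,p)` variables). -/
noncomputable def XL4 (L : ℝ × ℝ → ℝ) (F : ℝ × ℝ × ℝ × ℝ → ℝ)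
    (x : ℝ × ℝ × ℝ × ℝ) : ℝ :=
  pdp L (x.2.1, x.2.2.2) * pdQ F x - pdq L (x.2.1, x.2.2.2) * pdP F x

/-- The operator `U = p_u + 2γ(u) X_L` acting on functions of the extended phase space. -/
noncomputable def Uop (L : ℝ × ℝ → ℝ) (γ : ℝ → ℝ) (F : ℝ × ℝ × ℝ × ℝ → ℝ)
    (x : ℝ × ℝ × ℝ × ℝ) : ℝ :=
  x.2.2.1 * F x + 2 * γ x.1 * XL4 L F x

lemma hd_q (F : ℝ × ℝ → ℝ) (hF : ContDiff ℝ (⊤ : ℕ∞) F) (a b : ℝ) :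
    HasDerivAt (fun t => F (t, b)) (pdq F (a, b)) a := by
  have h1 : DifferentiableAt ℝ (fun t : ℝ => F (t, b)) a :=
    (hF.differentiable (by simp) (a, b)).comp a
      ((differentiableAt_id.prodMk (differentiableAt_const b)))
  simpa [pdq] using h1.hasDerivAt

lemma hd_p (F : ℝ × ℝ → ℝ) (hF : ContDiff ℝ (⊤ : ℕ∞) F) (a b : ℝ) :
    HasDerivAt (fun t => F (a, t)) (pdp F (a, b)) b := by
  have h1 : DifferentiableAt ℝ (fun t : ℝ => F (a, t)) b :=
    (hF.differentiable (by simp) (a, b)).comp b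
      (((differentiableAt_const a).prodMk differentiableAt_id))
  simpa [pdp] using h1.hasDerivAt

lemma contDiff_pdq (F : ℝ × ℝ → ℝ) (hF : ContDiff ℝ (⊤ : ℕ∞) F) : ContDiff ℝ (⊤ : ℕ∞) (pdq F) := by
  have key : pdq F = fun y => fderiv ℝ F y (1, 0) := by
    funext y
    have hline : HasDerivAt (fun t : ℝ => (t, y.2)) ((1 : ℝ), (0 : ℝ)) y.1 :=
      (hasDerivAt_id y.1).prodMk (hasDerivAt_const y.1 y.2)
    have := ((hF.differentiable (by simp) (y.1, y.2)).hasFDerivAt.comp_hasDerivAt y.1 hline)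
    simpa [pdq, Function.comp_def] using this.deriv
  rw [key]
  exact (hF.fderiv_right (by simp)).clm_apply contDiff_const

lemma contDiff_pdp (F : ℝ × ℝ → ℝ) (hF : ContDiff ℝ (⊤ : ℕ∞) F) : ContDiff ℝ (⊤ : ℕ∞) (pdp F) := by
  have key : pdp F = fun y => fderiv ℝ F y (0, 1) := by
    funext y
    have hline : HasDerivAt (fun t : ℝ => (y.1, t)) ((0 : ℝ), (1 : ℝ)) y.2 :=
      (hasDerivAt_const y.2 y.1).prodMk (hasDerivAt_id y.2)
    have := ((hF.differentiable (by simp) (y.1, y.2)).hasFDerivAt.comp_hasDerivAt y.2 hline)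
    simpa [pdp, Function.comp_def] using this.deriv
  rw [key]
  exact (hF.fderiv_right (by simp)).clm_apply contDiff_const

lemma Kclosed
    (L G : ℝ × ℝ → ℝ) (hL : ContDiff ℝ (⊤ : ℕ∞) L) (hG : ContDiff ℝ (⊤ : ℕ∞) G)
    (c c₀ Ω : ℝ)
    (hfund : ∀ y, XL L (XL L G) y = -2 * (c * L y + c₀) * G y)
    (γ : ℝ → ℝ)
    (Kbar : ℝ × ℝ × ℝ × ℝ → ℝ)
    (hK : ∀ x : ℝ × ℝ × ℝ × ℝ,
      Kbar x = Uop L γ (Uop L γ (fun z => G (z.2.1, z.2.2.2))) x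
               + 2 * Ω / γ x.1 ^ 2 * G (x.2.1, x.2.2.2)) :
    ∀ x : ℝ × ℝ × ℝ × ℝ,
      Kbar x = x.2.2.1 ^ 2 * G (x.2.1, x.2.2.2)
        + 4 * γ x.1 * x.2.2.1 * XL L G (x.2.1, x.2.2.2)
        - 8 * γ x.1 ^ 2 * (c * L (x.2.1, x.2.2.2) + c₀) * G (x.2.1, x.2.2.2)
        + 2 * Ω / γ x.1 ^ 2 * G (x.2.1, x.2.2.2) := by
  intro x
  set Xg : ℝ × ℝ → ℝ := XL L G with hXgdef
  have hXgc : ContDiff ℝ (⊤ : ℕ∞) Xg :=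
    ((contDiff_pdp L hL).mul (contDiff_pdq G hG)).sub
      ((contDiff_pdq L hL).mul (contDiff_pdp G hG))
  -- inner Uop closed form
  have hF1 : ∀ z : ℝ × ℝ × ℝ × ℝ,
      Uop L γ (fun z => G (z.2.1, z.2.2.2)) z
        = z.2.2.1 * G (z.2.1, z.2.2.2) + 2 * γ z.1 * Xg (z.2.1, z.2.2.2) := by
    intro z
    have e1 : pdQ (fun z : ℝ × ℝ × ℝ × ℝ => G (z.2.1, z.2.2.2)) z
        = pdq G (z.2.1, z.2.2.2) := by
      simp [pdQ, pdq]
    have e2 : pdP (fun z : ℝ × ℝ × ℝ × ℝ => G (z.2.1, z.2.2.2)) z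
        = pdp G (z.2.1, z.2.2.2) := by
      simp [pdP, pdp]
    simp only [Uop, XL4, e1, e2, hXgdef, XL]
  obtain ⟨u, q, pu, p⟩ := x
  rw [hK]
  have hUF1 : (Uop L γ (Uop L γ (fun z => G (z.2.1, z.2.2.2)))) (u, q, pu, p)
      = pu * (pu * G (q, p) + 2 * γ u * Xg (q, p))
        + 2 * γ u * (pdp L (q, p) * (pu * pdq G (q, p) + 2 * γ u * pdq Xg (q, p))
          - pdq L (q, p) * (pu * pdp G (q, p) + 2 * γ u * pdp Xg (q, p))) := by
    have eQ : pdQ (Uop L γ (fun z => G (z.2.1, z.2.2.2))) (u, q, pu, p)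
        = pu * pdq G (q, p) + 2 * γ u * pdq Xg (q, p) := by
      have hfun : (fun t => (Uop L γ (fun z => G (z.2.1, z.2.2.2))) (u, t, pu, p))
          = fun t => pu * G (t, p) + 2 * γ u * Xg (t, p) := by
        funext t; rw [hF1]
      have hD : HasDerivAt (fun t => pu * G (t, p) + 2 * γ u * Xg (t, p))
          (pu * pdq G (q, p) + 2 * γ u * pdq Xg (q, p)) q :=
        ((hd_q G hG q p).const_mul pu).add ((hd_q Xg hXgc q p).const_mul (2 * γ u))
      simp only [pdQ]
      rw [hfun, hD.deriv]
    have eP : pdP (Uop L γ (fun z => G (z.2.1, z.2.2.2))) (u, q, pu, p)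
        = pu * pdp G (q, p) + 2 * γ u * pdp Xg (q, p) := by
      have hfun : (fun t => (Uop L γ (fun z => G (z.2.1, z.2.2.2))) (u, q, pu, t))
          = fun t => pu * G (q, t) + 2 * γ u * Xg (q, t) := by
        funext t; rw [hF1]
      have hD : HasDerivAt (fun t => pu * G (q, t) + 2 * γ u * Xg (q, t))
          (pu * pdp G (q, p) + 2 * γ u * pdp Xg (q, p)) p :=
        ((hd_p G hG q p).const_mul pu).add ((hd_p Xg hXgc q p).const_mul (2 * γ u))
      simp only [pdP]
      rw [hfun, hD.deriv]
    have unf : (Uop L γ (Uop L γ (fun z => G (z.2.1, z.2.2.2)))) (u, q, pu, p)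
        = pu * (Uop L γ (fun z => G (z.2.1, z.2.2.2))) (u, q, pu, p)
          + 2 * γ u * (pdp L (q, p) * pdQ (Uop L γ (fun z => G (z.2.1, z.2.2.2))) (u, q, pu, p)
            - pdq L (q, p) * pdP (Uop L γ (fun z => G (z.2.1, z.2.2.2))) (u, q, pu, p)) := rfl
    rw [unf, eQ, eP, hF1]
  rw [hUF1]
  have hf := hfund (q, p)
  simp only [hXgdef]
  simp only [XL] at hf ⊢
  linear_combination (4 * γ u ^ 2) * hf


/-- The extension with `k = 2`, `Ω ≠ 0`:
`H = ½p_u² - 4γ'L + 4c₀γ² + Ω/γ²` Poisson-commutes with the characteristic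
first integral `K̄ = (p_u + 2γX_L)²(G) + 2Ωγ⁻²G`. -/
theorem extension_first_integral_k2_Omega
    (L G : ℝ × ℝ → ℝ) (hL : ContDiff ℝ (⊤ : ℕ∞) L) (hG : ContDiff ℝ (⊤ : ℕ∞) G)
    (c c₀ C Ω : ℝ)
    (hfund : ∀ y, XL L (XL L G) y = -2 * (c * L y + c₀) * G y)
    (γ : ℝ → ℝ) (hγs : ContDiff ℝ (⊤ : ℕ∞) γ)
    (s : Set ℝ) (hs : IsOpen s)
    (hODE : ∀ u ∈ s, deriv γ u + c * γ u ^ 2 + C = 0)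
    (hγ0 : ∀ u ∈ s, γ u ≠ 0)
    (H Kbar : ℝ × ℝ × ℝ × ℝ → ℝ)
    (hH : ∀ x : ℝ × ℝ × ℝ × ℝ,
      H x = (1 / 2) * x.2.2.1 ^ 2 - 4 * deriv γ x.1 * L (x.2.1, x.2.2.2)
            + 4 * c₀ * γ x.1 ^ 2 + Ω / γ x.1 ^ 2)
    (hK : ∀ x : ℝ × ℝ × ℝ × ℝ,
      Kbar x = Uop L γ (Uop L γ (fun z => G (z.2.1, z.2.2.2))) x
               + 2 * Ω / γ x.1 ^ 2 * G (x.2.1, x.2.2.2)) :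
    ∀ x : ℝ × ℝ × ℝ × ℝ, x.1 ∈ s → PB H Kbar x = 0 := by
  have hK' := Kclosed L G hL hG c c₀ Ω hfund γ Kbar hK
  intro x hx
  obtain ⟨u, q, pu, p⟩ := x
  replace hx : u ∈ s := hx
  have hg : γ u ≠ 0 := hγ0 u hx
  set Xg : ℝ × ℝ → ℝ := XL L G with hXgdef
  have hXgc : ContDiff ℝ (⊤ : ℕ∞) Xg :=
    ((contDiff_pdp L hL).mul (contDiff_pdq G hG)).sub
      ((contDiff_pdq L hL).mul (contDiff_pdp G hG))
  have hγd : HasDerivAt γ (deriv γ u) u := (hγs.differentiable (by simp) u).hasDerivAt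
  have hEq : deriv γ =ᶠ[nhds u] (fun t => -(c * γ t ^ 2 + C)) := by
    filter_upwards [hs.mem_nhds hx] with t ht
    have := hODE t ht; linarith
  have hγ'' : HasDerivAt (deriv γ) (-((c : ℝ) * ((2 : ℕ) * γ u ^ (2 - 1) * deriv γ u))) u := by
    have h2 : HasDerivAt (fun t => -(c * γ t ^ 2 + C))
        (-((c : ℝ) * ((2 : ℕ) * γ u ^ (2 - 1) * deriv γ u))) u := by
      have hγdiff : HasDerivAt (fun t : ℝ => γ t) (deriv γ u) u := hγd
      exact (((hγdiff.pow 2).const_mul c).add_const C).neg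
    exact h2.congr_of_eventuallyEq hEq
  -- the eight partial derivatives
  have eUH : pdU H (u, q, pu, p)
      = 8 * c * γ u * deriv γ u * L (q, p) + 8 * c₀ * γ u * deriv γ u
        - 2 * Ω * deriv γ u / γ u ^ 3 := by
    have hfun : (fun t => H (t, q, pu, p))
        = fun t => 1 / 2 * pu ^ 2 - 4 * deriv γ t * L (q, p)
            + 4 * c₀ * γ t ^ 2 + Ω / γ t ^ 2 := by
      funext t; rw [hH]
    have hD : HasDerivAt (fun t => 1 / 2 * pu ^ 2 - 4 * deriv γ t * L (q, p)
        + 4 * c₀ * γ t ^ 2 + Ω / γ t ^ 2) _ u :=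
      ((((hγ''.const_mul 4).mul_const (L (q, p))).const_sub (1 / 2 * pu ^ 2)).add
        ((hγd.pow 2).const_mul (4 * c₀))).add
        ((hasDerivAt_const u Ω).div (hγd.pow 2) (pow_ne_zero 2 hg))
    simp only [pdU]
    rw [hfun, hD.deriv]
    push_cast
    field_simp
    ring
  have eQH : pdQ H (u, q, pu, p) = -(4 * deriv γ u * pdq L (q, p)) := by
    have hfun : (fun t => H (u, t, pu, p))
        = fun t => 1 / 2 * pu ^ 2 - 4 * deriv γ u * L (t, p)
            + 4 * c₀ * γ u ^ 2 + Ω / γ u ^ 2 := by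
      funext t; rw [hH]
    have hD : HasDerivAt (fun t => 1 / 2 * pu ^ 2 - 4 * deriv γ u * L (t, p)
        + 4 * c₀ * γ u ^ 2 + Ω / γ u ^ 2) _ q :=
      ((((hd_q L hL q p).const_mul (4 * deriv γ u)).const_sub (1 / 2 * pu ^ 2)).add_const
        (4 * c₀ * γ u ^ 2)).add_const (Ω / γ u ^ 2)
    simp only [pdQ]
    rw [hfun, hD.deriv]
  have ePH : pdP H (u, q, pu, p) = -(4 * deriv γ u * pdp L (q, p)) := by
    have hfun : (fun t => H (u, q, pu, t))
        = fun t => 1 / 2 * pu ^ 2 - 4 * deriv γ u * L (q, t)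
            + 4 * c₀ * γ u ^ 2 + Ω / γ u ^ 2 := by
      funext t; rw [hH]
    have hD : HasDerivAt (fun t => 1 / 2 * pu ^ 2 - 4 * deriv γ u * L (q, t)
        + 4 * c₀ * γ u ^ 2 + Ω / γ u ^ 2) _ p :=
      ((((hd_p L hL q p).const_mul (4 * deriv γ u)).const_sub (1 / 2 * pu ^ 2)).add_const
        (4 * c₀ * γ u ^ 2)).add_const (Ω / γ u ^ 2)
    simp only [pdP]
    rw [hfun, hD.deriv]
  have ePuH : pdPu H (u, q, pu, p) = pu := by
    have hfun : (fun t => H (u, q, t, p))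
        = fun t => 1 / 2 * t ^ 2 - 4 * deriv γ u * L (q, p)
            + 4 * c₀ * γ u ^ 2 + Ω / γ u ^ 2 := by
      funext t; rw [hH]
    have hD : HasDerivAt (fun t : ℝ => 1 / 2 * t ^ 2 - 4 * deriv γ u * L (q, p)
        + 4 * c₀ * γ u ^ 2 + Ω / γ u ^ 2) _ pu :=
      (((hasDerivAt_pow 2 pu).const_mul (1 / 2 : ℝ)).sub_const
        (4 * deriv γ u * L (q, p))).add_const (4 * c₀ * γ u ^ 2) |>.add_const (Ω / γ u ^ 2)
    simp only [pdPu]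
    rw [hfun, hD.deriv]
    push_cast
    ring
  have eUK : pdU Kbar (u, q, pu, p)
      = 4 * deriv γ u * pu * Xg (q, p)
        - 16 * γ u * deriv γ u * (c * L (q, p) + c₀) * G (q, p)
        - 4 * Ω * deriv γ u / γ u ^ 3 * G (q, p) := by
    have hfun : (fun t => Kbar (t, q, pu, p))
        = fun t => pu ^ 2 * G (q, p) + 4 * γ t * pu * Xg (q, p)
            - 8 * γ t ^ 2 * (c * L (q, p) + c₀) * G (q, p)
            + 2 * Ω / γ t ^ 2 * G (q, p) := by
      funext t; rw [hK']
    have hD : HasDerivAt (fun t => pu ^ 2 * G (q, p) + 4 * γ t * pu * Xg (q, p)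
        - 8 * γ t ^ 2 * (c * L (q, p) + c₀) * G (q, p)
        + 2 * Ω / γ t ^ 2 * G (q, p)) _ u :=
      (((((hγd.const_mul 4).mul_const pu).mul_const (Xg (q, p))).const_add
          (pu ^ 2 * G (q, p))).sub
        ((((hγd.pow 2).const_mul 8).mul_const (c * L (q, p) + c₀)).mul_const (G (q, p)))).add
        (((hasDerivAt_const u (2 * Ω)).div (hγd.pow 2) (pow_ne_zero 2 hg)).mul_const (G (q, p)))
    simp only [pdU]
    rw [hfun, hD.deriv]
    push_cast
    simp only [Pi.pow_apply]
    field_simp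
    ring
  have eQK : pdQ Kbar (u, q, pu, p)
      = pu ^ 2 * pdq G (q, p) + 4 * γ u * pu * pdq Xg (q, p)
        - 8 * γ u ^ 2 * ((c * pdq L (q, p)) * G (q, p) + (c * L (q, p) + c₀) * pdq G (q, p))
        + 2 * Ω / γ u ^ 2 * pdq G (q, p) := by
    have hfun : (fun t => Kbar (u, t, pu, p))
        = fun t => pu ^ 2 * G (t, p) + 4 * γ u * pu * Xg (t, p)
            - 8 * γ u ^ 2 * (c * L (t, p) + c₀) * G (t, p)
            + 2 * Ω / γ u ^ 2 * G (t, p) := by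
      funext t; rw [hK']
    have hD : HasDerivAt (fun t => pu ^ 2 * G (t, p) + 4 * γ u * pu * Xg (t, p)
        - 8 * γ u ^ 2 * (c * L (t, p) + c₀) * G (t, p)
        + 2 * Ω / γ u ^ 2 * G (t, p)) _ q :=
      ((((hd_q G hG q p).const_mul (pu ^ 2)).add
          ((hd_q Xg hXgc q p).const_mul (4 * γ u * pu))).sub
        (((((hd_q L hL q p).const_mul c).add_const c₀).const_mul (8 * γ u ^ 2)).mul
          (hd_q G hG q p))).add
        ((hd_q G hG q p).const_mul (2 * Ω / γ u ^ 2))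
    simp only [pdQ]
    rw [hfun, hD.deriv]
    ring
  have ePK : pdP Kbar (u, q, pu, p)
      = pu ^ 2 * pdp G (q, p) + 4 * γ u * pu * pdp Xg (q, p)
        - 8 * γ u ^ 2 * ((c * pdp L (q, p)) * G (q, p) + (c * L (q, p) + c₀) * pdp G (q, p))
        + 2 * Ω / γ u ^ 2 * pdp G (q, p) := by
    have hfun : (fun t => Kbar (u, q, pu, t))
        = fun t => pu ^ 2 * G (q, t) + 4 * γ u * pu * Xg (q, t)
            - 8 * γ u ^ 2 * (c * L (q, t) + c₀) * G (q, t)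
            + 2 * Ω / γ u ^ 2 * G (q, t) := by
      funext t; rw [hK']
    have hD : HasDerivAt (fun t => pu ^ 2 * G (q, t) + 4 * γ u * pu * Xg (q, t)
        - 8 * γ u ^ 2 * (c * L (q, t) + c₀) * G (q, t)
        + 2 * Ω / γ u ^ 2 * G (q, t)) _ p :=
      ((((hd_p G hG q p).const_mul (pu ^ 2)).add
          ((hd_p Xg hXgc q p).const_mul (4 * γ u * pu))).sub
        (((((hd_p L hL q p).const_mul c).add_const c₀).const_mul (8 * γ u ^ 2)).mul
          (hd_p G hG q p))).add
        ((hd_p G hG q p).const_mul (2 * Ω / γ u ^ 2))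
    simp only [pdP]
    rw [hfun, hD.deriv]
    ring
  have ePuK : pdPu Kbar (u, q, pu, p)
      = 2 * pu * G (q, p) + 4 * γ u * Xg (q, p) := by
    have hfun : (fun t => Kbar (u, q, t, p))
        = fun t => t ^ 2 * G (q, p) + 4 * γ u * t * Xg (q, p)
            - 8 * γ u ^ 2 * (c * L (q, p) + c₀) * G (q, p)
            + 2 * Ω / γ u ^ 2 * G (q, p) := by
      funext t; rw [hK']
    have hD : HasDerivAt (fun t : ℝ => t ^ 2 * G (q, p) + 4 * γ u * t * Xg (q, p)
        - 8 * γ u ^ 2 * (c * L (q, p) + c₀) * G (q, p)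
        + 2 * Ω / γ u ^ 2 * G (q, p)) _ pu :=
      ((((hasDerivAt_pow 2 pu).mul_const (G (q, p))).add
          (((hasDerivAt_id pu).const_mul (4 * γ u)).mul_const (Xg (q, p)))).sub_const
        (8 * γ u ^ 2 * (c * L (q, p) + c₀) * G (q, p))).add_const
        (2 * Ω / γ u ^ 2 * G (q, p))
    simp only [pdPu]
    rw [hfun, hD.deriv]
    push_cast
    ring
  have hf := hfund (q, p)
  simp only [XL] at hf
  simp only [PB, eUH, eQH, ePH, ePuH, eUK, eQK, ePK, ePuK]
  simp only [hXgdef, XL]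
  field_simp
  rw [hXgdef] at hf
  linear_combination (16 * deriv γ u * γ u ^ 4 * pu) * hf
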